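/- arXiv:2309.14583 — 4 statements merged into one kernel-verified Lean document; each statement's English description precedes it below -/
import Mathlib

section
/- In the scalar SIR model, if β x(0) ≤ γ and y(0) > 0 and x(0) > 0, then y(t) is strictly decreasing for all t ≥ 0. -/
/-!
For a linear equation `g' = a g`, the product `g · exp (-∫ a)` is constant, so `x` and `y` stay
positive. Then `x' = -β x y < 0`, hence `β x t < β x 0 ≤ γ` for `t > 0`, which makes
`y' = (β x - γ) y` negative.
-/

open Set Real

theorem hasDerivWithinAt_integral_Ici {a : ℝ → ℝ} {t₀ t : ℝ}
    (ha : ContinuousOn a (Ici t₀)) (ht : t₀ ≤ t) :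
    HasDerivWithinAt (fun u => ∫ s in t₀..u, a s) (a t) (Ici t) t := by
  have hIoi : Ioi t ⊆ Ici t₀ := fun u hu => ht.trans (le_of_lt hu)
  refine intervalIntegral.integral_hasDerivWithinAt_right (t := Ioi t)
    (ha.mono fun u hu => (uIcc_of_le ht ▸ hu).1).intervalIntegrable ?_ ((ha t ht).mono hIoi)
  exact ⟨Ici t₀, Filter.mem_of_superset self_mem_nhdsWithin hIoi,
    ha.aestronglyMeasurable measurableSet_Ici⟩

theorem eq_mul_exp_integral_of_hasDerivAt {a g : ℝ → ℝ} {t₀ T : ℝ}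
    (ha : ContinuousOn a (Ici t₀)) (hg : ∀ t ∈ Ici t₀, HasDerivAt g (a t * g t) t)
    (hT : t₀ ≤ T) :
    g T = g t₀ * exp (∫ s in t₀..T, a s) := by
  set F : ℝ → ℝ := fun u => ∫ s in t₀..u, a s
  have hF : ContinuousOn F (Icc t₀ T) := by
    have h_int : MeasureTheory.IntegrableOn a (uIcc t₀ T) := by
      rw [uIcc_of_le hT]
      exact (ha.mono fun u hu => hu.1).integrableOn_Icc
    simpa only [uIcc_of_le hT] using intervalIntegral.continuousOn_primitive_interval h_int
  have hg_cont : ContinuousOn g (Icc t₀ T) :=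
    fun t ht => (hg t ht.1).continuousAt.continuousWithinAt
  have h_const : ∀ u ∈ Icc t₀ T, g u * exp (-F u) = g t₀ * exp (-F t₀) := by
    refine constant_of_has_deriv_right_zero (hg_cont.mul hF.neg.rexp) fun u hu => ?_
    have hexp := (hasDerivWithinAt_integral_Ici ha hu.1).neg.exp
    exact ((hg u hu.1).hasDerivWithinAt.mul hexp).congr_deriv (by simp only [Pi.neg_apply]; ring)
  have hT' := h_const T ⟨hT, le_rfl⟩
  rw [show F t₀ = 0 from intervalIntegral.integral_same, neg_zero, exp_zero, mul_one] at hT'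
  calc g T = g T * exp (-F T) * exp (F T) := by
        rw [mul_assoc, ← exp_add, neg_add_cancel, exp_zero, mul_one]
    _ = g t₀ * exp (∫ s in t₀..T, a s) := by rw [hT']

theorem pos_of_hasDerivAt_mul {a g : ℝ → ℝ} {t₀ : ℝ} (ha : ContinuousOn a (Ici t₀))
    (hg : ∀ t ∈ Ici t₀, HasDerivAt g (a t * g t) t) (hg₀ : 0 < g t₀) :
    ∀ t ∈ Ici t₀, 0 < g t :=
  fun _ ht => eq_mul_exp_integral_of_hasDerivAt ha hg ht ▸ mul_pos hg₀ (exp_pos _)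

theorem strictAntiOn_Ici_of_hasDerivAt_neg {f f' : ℝ → ℝ} {t₀ : ℝ}
    (hf : ContinuousOn f (Ici t₀)) (hf' : ∀ t ∈ Ioi t₀, HasDerivAt f (f' t) t)
    (hneg : ∀ t ∈ Ioi t₀, f' t < 0) :
    StrictAntiOn f (Ici t₀) :=
  strictAntiOn_of_deriv_neg (convex_Ici t₀) hf fun t ht => by
    rw [interior_Ici] at ht
    exact (hf' t ht).deriv ▸ hneg t ht

theorem stmt_1_general (β γ : ℝ) (hβ : 0 < β)
    (x y : ℝ → ℝ)
    (hx : ∀ t ∈ Set.Ici (0:ℝ), HasDerivAt x (-β * x t * y t) t)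
    (hy : ∀ t ∈ Set.Ici (0:ℝ), HasDerivAt y ((β * x t - γ) * y t) t)
    (hx0 : 0 < x 0) (hy0 : 0 < y 0)
    (hcrit : β * x 0 ≤ γ) :
    StrictAntiOn y (Set.Ici (0:ℝ)) := by
  have hx_cont : ContinuousOn x (Ici 0) := fun t ht => (hx t ht).continuousAt.continuousWithinAt
  have hy_cont : ContinuousOn y (Ici 0) := fun t ht => (hy t ht).continuousAt.continuousWithinAt
  have x_pos : ∀ t ∈ Ici (0:ℝ), 0 < x t :=
    pos_of_hasDerivAt_mul (a := fun t => -β * y t) (continuousOn_const.mul hy_cont)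
      (fun t ht => (hx t ht).congr_deriv (mul_right_comm _ _ _)) hx0
  have y_pos : ∀ t ∈ Ici (0:ℝ), 0 < y t :=
    pos_of_hasDerivAt_mul ((continuousOn_const.mul hx_cont).sub continuousOn_const) hy hy0
  have x_anti : StrictAntiOn x (Ici 0) := by
    refine strictAntiOn_Ici_of_hasDerivAt_neg hx_cont (fun t (ht : 0 < t) => hx t ht.le)
      fun t (ht : 0 < t) => ?_
    exact mul_neg_of_neg_of_pos (mul_neg_of_neg_of_pos (neg_neg_of_pos hβ) (x_pos t ht.le))
      (y_pos t ht.le)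
  refine strictAntiOn_Ici_of_hasDerivAt_neg hy_cont (fun t (ht : 0 < t) => hy t ht.le)
    fun t (ht : 0 < t) => ?_
  have hxt : β * x t < γ := calc
    β * x t < β * x 0 := mul_lt_mul_of_pos_left (x_anti self_mem_Ici ht.le ht) hβ
    _ ≤ γ := hcrit
  exact mul_neg_of_neg_of_pos (sub_neg.mpr hxt) (y_pos t ht.le)

theorem stmt_1 (β γ : ℝ) (hβ : 0 < β) (hγ : 0 < γ)
    (x y : ℝ → ℝ)
    (hx : ∀ t ∈ Set.Ici (0:ℝ), HasDerivAt x (-β * x t * y t) t)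
    (hy : ∀ t ∈ Set.Ici (0:ℝ), HasDerivAt y ((β * x t - γ) * y t) t)
    (hx0 : 0 < x 0) (hy0 : 0 < y 0) (hsum : x 0 + y 0 ≤ 1)
    (hcrit : β * x 0 ≤ γ) :
    StrictAntiOn y (Set.Ici (0:ℝ)) :=
  stmt_1_general β γ hβ x y hx hy hx0 hy0 hcrit
end

section
/- For the rank-1 network SIR model, each quantity h_i = x_i · exp(-a_i(x̄ + ȳ)/γ) is an invariant of motion, i.e., its time derivative along solutions is zero. -/
/-!
Along the flow, `x̄ + ȳ` decreases at rate `γ ȳ`, so `-aᵢ (x̄ + ȳ) / γ` grows at rate `aᵢ ȳ`,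
which is exactly the logarithmic decay rate of `xᵢ`; `exp` of it is an integrating factor.
-/

open Finset

theorem hasDerivAt_mul_exp_eq_zero {u ψ : ℝ → ℝ} {w t : ℝ}
    (hu : HasDerivAt u (u t * w) t) (hψ : HasDerivAt ψ (-w) t) :
    HasDerivAt (fun s => u s * Real.exp (ψ s)) 0 t := by
  refine (hu.mul hψ.exp).congr_deriv ?_
  ring

theorem hasDerivAt_sum_weighted_SIR {ι : Type*} [Fintype ι] (a b : ι → ℝ) (γ : ℝ)
    (x y : ℝ → ι → ℝ) (t : ℝ)
    (hx : ∀ i, HasDerivAt (fun s => x s i) (-(a i) * x t i * (∑ j, b j * y t j)) t)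
    (hy : ∀ i, HasDerivAt (fun s => y s i) (a i * x t i * (∑ j, b j * y t j) - γ * y t i) t) :
    HasDerivAt (fun s => (∑ j, b j * x s j) + (∑ j, b j * y s j))
      (-γ * ∑ j, b j * y t j) t := by
  have hxbar := HasDerivAt.fun_sum fun j (_ : j ∈ univ) => (hx j).const_mul (b j)
  have hybar := HasDerivAt.fun_sum fun j (_ : j ∈ univ) => (hy j).const_mul (b j)
  refine (hxbar.add hybar).congr_deriv ?_
  rw [← sum_add_distrib, mul_sum]
  exact sum_congr rfl fun j _ => by ring

theorem stmt_3_general (n : ℕ) (a b : Fin n → ℝ)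
    (γ : ℝ) (hγ : 0 < γ)
    (x y : ℝ → Fin n → ℝ)
    (hx : ∀ i t, HasDerivAt (fun s => x s i)
        (-(a i) * x t i * (∑ j, b j * y t j)) t)
    (hy : ∀ i t, HasDerivAt (fun s => y s i)
        (a i * x t i * (∑ j, b j * y t j) - γ * y t i) t) :
    ∀ i t, HasDerivAt
      (fun s => x s i *
        Real.exp (-(a i) * ((∑ j, b j * x s j) + (∑ j, b j * y s j)) / γ)) 0 t := by
  intro i t
  have htotal := hasDerivAt_sum_weighted_SIR a b γ x y t (hx · t) (hy · t)
  refine hasDerivAt_mul_exp_eq_zero (w := -(a i) * ∑ j, b j * y t j) ?_ ?_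
  · exact (hx i t).congr_deriv (by ring)
  · refine ((htotal.const_mul (-(a i))).div_const γ).congr_deriv ?_
    field_simp

theorem stmt_3 (n : ℕ) (a b : Fin n → ℝ) (ha : ∀ i, 0 < a i) (hb : ∀ i, 0 < b i)
    (γ : ℝ) (hγ : 0 < γ)
    (x y : ℝ → Fin n → ℝ)
    (hx : ∀ i t, HasDerivAt (fun s => x s i)
        (-(a i) * x t i * (∑ j, b j * y t j)) t)
    (hy : ∀ i t, HasDerivAt (fun s => y s i)
        (a i * x t i * (∑ j, b j * y t j) - γ * y t i) t) :
    ∀ i t, HasDerivAt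
      (fun s => x s i *
        Real.exp (-(a i) * ((∑ j, b j * x s j) + (∑ j, b j * y s j)) / γ)) 0 t :=
  stmt_3_general n a b γ hγ x y hx hy
end

section
/- Fix positive vectors a, b in ℝⁿ, γ > 0, and a state (x, y) with x ≥ 0, x ≠ 0, y ≥ 0, y ≠ 0, x + y ≤ 1 entrywise, and let x̄ = Σᵢ bᵢ xᵢ and ȳ = Σᵢ bᵢ yᵢ > 0. Then the function g(ξ) = Σᵢ bᵢ xᵢ exp(aᵢ(ξ - x̄ - ȳ)/γ) - ξ is strictly convex with g(0) > 0 and g(x̄) < 0, and hence the equation ξ = Σᵢ bᵢ xᵢ exp(aᵢ(ξ - x̄ - ȳ)/γ) has exactly one solution in the open interval (0, x̄). -/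
open Finset

private lemma strictConvexOn_smul_exp_affine (c k d : ℝ) (hc : 0 < c) (hk : k ≠ 0) :
    StrictConvexOn ℝ Set.univ (fun ξ : ℝ => c * Real.exp (k * ξ + d)) := by
  refine ⟨convex_univ, fun p _ q _ hpq u v hu hv huv => ?_⟩
  have hne : k * p + d ≠ k * q + d := fun h => hpq (mul_left_cancel₀ hk (add_right_cancel h))
  have h := strictConvexOn_exp.2 (Set.mem_univ (k * p + d)) (Set.mem_univ (k * q + d)) hne hu hv huv
  simp only [smul_eq_mul] at h ⊢
  have harg : u * (k * p + d) + v * (k * q + d) = k * (u * p + v * q) + d := by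
    linear_combination d * huv
  rw [harg] at h
  nlinarith [mul_lt_mul_of_pos_left h hc]

private lemma convexOn_exp_affine (k d : ℝ) :
    ConvexOn ℝ Set.univ (fun ξ : ℝ => Real.exp (k * ξ + d)) := by
  refine ⟨convex_univ, fun p _ q _ u v hu hv huv => ?_⟩
  have h := convexOn_exp.2 (Set.mem_univ (k * p + d)) (Set.mem_univ (k * q + d)) hu hv huv
  simp only [smul_eq_mul] at h ⊢
  have harg : u * (k * p + d) + v * (k * q + d) = k * (u * p + v * q) + d := by
    linear_combination d * huv
  rw [harg] at h
  exact h

private lemma convexOn_sum' {ι : Type*} (t : Finset ι) (f : ι → ℝ → ℝ)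
    (h : ∀ i ∈ t, ConvexOn ℝ Set.univ (f i)) :
    ConvexOn ℝ Set.univ (fun ξ => ∑ i ∈ t, f i ξ) := by
  induction t using Finset.cons_induction with
  | empty => simpa using convexOn_const (0:ℝ) convex_univ
  | cons i t hi ih =>
    simp only [Finset.sum_cons]
    exact (h i (Finset.mem_cons_self i t)).add (ih fun j hj => h j (Finset.mem_cons_of_mem hj))

theorem stmt_8 (n : ℕ) (γ : ℝ) (hγ : 0 < γ)
    (a b x y : Fin n → ℝ)
    (ha : ∀ i, 0 < a i) (hb : ∀ i, 0 < b i)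
    (hx : ∀ i, 0 ≤ x i) (hy : ∀ i, 0 ≤ y i)
    (hxne : x ≠ 0) (hyne : y ≠ 0)
    (hsum : ∀ i, x i + y i ≤ 1) :
    Continuous (fun ξ => (∑ i, b i * x i *
        Real.exp (a i * (ξ - (∑ j, b j * x j) - (∑ j, b j * y j)) / γ)) - ξ) ∧
    StrictConvexOn ℝ Set.univ (fun ξ => (∑ i, b i * x i *
        Real.exp (a i * (ξ - (∑ j, b j * x j) - (∑ j, b j * y j)) / γ)) - ξ) ∧
    0 < (∑ i, b i * x i *
        Real.exp (a i * ((0:ℝ) - (∑ j, b j * x j) - (∑ j, b j * y j)) / γ)) - (0:ℝ) ∧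
    (∑ i, b i * x i *
        Real.exp (a i * ((∑ j, b j * x j) - (∑ j, b j * x j) - (∑ j, b j * y j)) / γ))
        - (∑ j, b j * x j) < 0 ∧
    ∃! ξ : ℝ, ξ ∈ Set.Ioo 0 (∑ j, b j * x j) ∧
      (∑ i, b i * x i *
        Real.exp (a i * (ξ - (∑ j, b j * x j) - (∑ j, b j * y j)) / γ)) - ξ = 0 := by
  set X : ℝ := ∑ j, b j * x j with hX
  set Y : ℝ := ∑ j, b j * y j with hY
  set g : ℝ → ℝ := fun ξ =>
    (∑ i, b i * x i * Real.exp (a i * (ξ - X - Y) / γ)) - ξ with hg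
  obtain ⟨i₀, hi₀⟩ : ∃ i, 0 < x i := by
    by_contra h
    push_neg at h
    exact hxne (funext fun i => le_antisymm (h i) (hx i))
  obtain ⟨j₀, hj₀⟩ : ∃ j, 0 < y j := by
    by_contra h
    push_neg at h
    exact hyne (funext fun j => le_antisymm (h j) (hy j))
  have hXpos : 0 < X := by
    refine Finset.sum_pos' (fun i _ => mul_nonneg (hb i).le (hx i)) ⟨i₀, Finset.mem_univ _, ?_⟩
    exact mul_pos (hb i₀) hi₀
  have hYpos : 0 < Y := by
    refine Finset.sum_pos' (fun j _ => mul_nonneg (hb j).le (hy j)) ⟨j₀, Finset.mem_univ _, ?_⟩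
    exact mul_pos (hb j₀) hj₀
  have hcont : Continuous g := by
    apply Continuous.sub _ continuous_id
    exact continuous_finset_sum _ fun i _ =>
      (continuous_const.mul ((Continuous.div_const (by fun_prop) γ).rexp))
  have hterm : ∀ i : Fin n, ConvexOn ℝ Set.univ
      (fun ξ : ℝ => b i * x i * Real.exp (a i * (ξ - X - Y) / γ)) := by
    intro i
    have h1 : ConvexOn ℝ Set.univ
        (fun ξ : ℝ => Real.exp (a i / γ * ξ + a i * (-X - Y) / γ)) :=
      convexOn_exp_affine _ _
    have h2 := h1.smul (c := b i * x i) (mul_nonneg (hb i).le (hx i))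
    have heq : ∀ ξ : ℝ, a i * (ξ - X - Y) / γ = a i / γ * ξ + a i * (-X - Y) / γ := by
      intro ξ; field_simp; ring
    refine h2.congr fun ξ _ => ?_
    simp only [smul_eq_mul, heq ξ]
  have htermstrict : StrictConvexOn ℝ Set.univ
      (fun ξ : ℝ => b i₀ * x i₀ * Real.exp (a i₀ * (ξ - X - Y) / γ)) := by
    have h1 := strictConvexOn_smul_exp_affine (b i₀ * x i₀) (a i₀ / γ) (a i₀ * (-X - Y) / γ)
      (mul_pos (hb i₀) hi₀) (ne_of_gt (div_pos (ha i₀) hγ))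
    convert h1 using 2 with ξ
    have : a i₀ * (ξ - X - Y) / γ = a i₀ / γ * ξ + a i₀ * (-X - Y) / γ := by
      field_simp; ring
    rw [this]
  have hconv : StrictConvexOn ℝ Set.univ g := by
    have hsplit : ∀ ξ : ℝ, g ξ =
        (b i₀ * x i₀ * Real.exp (a i₀ * (ξ - X - Y) / γ)) +
        ((∑ i ∈ Finset.univ.erase i₀, b i * x i * Real.exp (a i * (ξ - X - Y) / γ)) - ξ) := by
      intro ξ
      simp only [hg]
      rw [← Finset.add_sum_erase _ _ (Finset.mem_univ i₀)]
      ring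
    have hrest : ConvexOn ℝ Set.univ
        (fun ξ : ℝ => (∑ i ∈ Finset.univ.erase i₀,
          b i * x i * Real.exp (a i * (ξ - X - Y) / γ)) - ξ) := by
      refine ConvexOn.sub ?_ (concaveOn_id convex_univ)
      exact convexOn_sum' _ _ fun i _ => hterm i
    exact (htermstrict.add_convexOn hrest).congr fun ξ _ => (hsplit ξ).symm
  have hg0 : 0 < g 0 := by
    simp only [hg, sub_zero]
    refine Finset.sum_pos'
      (fun i _ => mul_nonneg (mul_nonneg (hb i).le (hx i)) (Real.exp_pos _).le)
      ⟨i₀, Finset.mem_univ _, ?_⟩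
    exact mul_pos (mul_pos (hb i₀) hi₀) (Real.exp_pos _)
  have hgX : g X < 0 := by
    simp only [hg]
    have hlt : (∑ i, b i * x i * Real.exp (a i * (X - X - Y) / γ)) < X := by
      rw [hX]
      refine Finset.sum_lt_sum (fun i _ => ?_) ⟨i₀, Finset.mem_univ _, ?_⟩
      · have hexp : Real.exp (a i * (X - X - Y) / γ) ≤ 1 := by
          rw [Real.exp_le_one_iff]
          have h' : a i * (X - X - Y) / γ = -(a i * Y / γ) := by ring
          rw [h']
          exact neg_nonpos.mpr (div_nonneg (mul_nonneg (ha i).le hYpos.le) hγ.le)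
        nlinarith [mul_nonneg (hb i).le (hx i), Real.exp_pos (a i * (X - X - Y) / γ)]
      · have hexp : Real.exp (a i₀ * (X - X - Y) / γ) < 1 := by
          rw [Real.exp_lt_one_iff]
          have h' : a i₀ * (X - X - Y) / γ = -(a i₀ * Y / γ) := by ring
          rw [h']
          have : 0 < a i₀ * Y / γ := div_pos (mul_pos (ha i₀) hYpos) hγ
          linarith
        nlinarith [mul_pos (hb i₀) hi₀]
    linarith
  refine ⟨hcont, hconv, hg0, hgX, ?_⟩
  have hmem : (0:ℝ) ∈ Set.Ioo (g X) (g 0) := ⟨hgX, hg0⟩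
  obtain ⟨ξ, hξmem, hξ⟩ := intermediate_value_Ioo' hXpos.le hcont.continuousOn hmem
  refine ⟨ξ, ⟨hξmem, hξ⟩, ?_⟩
  rintro ζ ⟨hζmem, hζ⟩
  by_contra hne
  have key : ∀ p q : ℝ, p ∈ Set.Ioo 0 X → q ∈ Set.Ioo 0 X → g p = 0 → g q = 0 → p < q → False := by
    intro p q hp hq hgp hgq hpq
    have hXp : X - p ≠ 0 := ne_of_gt (by linarith [hq.2])
    obtain ⟨u, v, hu, hv, huv, hq'⟩ : ∃ u v : ℝ, 0 < u ∧ 0 < v ∧ u + v = 1 ∧ u * p + v * X = q := by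
      refine ⟨(X - q) / (X - p), (q - p) / (X - p), ?_, ?_, ?_, ?_⟩
      · exact div_pos (by linarith [hq.2]) (by linarith [hq.2])
      · exact div_pos (by linarith) (by linarith [hq.2])
      · rw [← add_div, div_eq_one_iff_eq hXp]; ring
      · field_simp
        ring
    have h2 := hconv.2 (Set.mem_univ p) (Set.mem_univ X) (ne_of_lt hp.2) hu hv huv
    simp only [smul_eq_mul] at h2
    rw [hq', hgp, hgq] at h2
    have hv' := mul_neg_of_pos_of_neg hv hgX
    linarith
  rcases lt_or_gt_of_ne hne with h | h
  · exact key ζ ξ hζmem hξmem hζ hξ h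
  · exact key ξ ζ hξmem hζmem hξ hζ h
end

section
/- In the rank-1 network SIR model, the quantity w_i = x̃ - γ - a_i ȳ satisfies the strict differential inequality w_i'(t) < -a_i ȳ(t) w_i(t) for all t ≥ 0, provided ȳ(t) > 0 and Σⱼ aⱼ²bⱼxⱼ(t) ≥ 0. -/
open Finset

section RankOneSIR

variable {ι : Type*} [Fintype ι] (a b : ι → ℝ) (γ : ℝ) {x y : ℝ → ι → ℝ} {t : ℝ}

theorem hasDerivAt_sum_mul_mul_of_sir_susceptible
    (hx : ∀ j, HasDerivAt (fun s => x s j) (-(a j) * x t j * ∑ k, b k * y t k) t) :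
    HasDerivAt (fun s => ∑ j, a j * b j * x s j)
      (-(∑ k, b k * y t k) * ∑ j, a j ^ 2 * b j * x t j) t := by
  refine (HasDerivAt.fun_sum fun j _ => (hx j).const_mul (a j * b j)).congr_deriv ?_
  rw [mul_sum]
  exact sum_congr rfl fun j _ => by ring

theorem hasDerivAt_sum_mul_of_sir_infected
    (hy : ∀ j, HasDerivAt (fun s => y s j) (a j * x t j * (∑ k, b k * y t k) - γ * y t j) t) :
    HasDerivAt (fun s => ∑ k, b k * y s k)
      ((∑ k, b k * y t k) * ((∑ j, a j * b j * x t j) - γ)) t := by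
  refine (HasDerivAt.fun_sum fun j _ => (hy j).const_mul (b j)).congr_deriv ?_
  rw [mul_sub, mul_comm _ γ, mul_sum, mul_sum, ← sum_sub_distrib]
  exact sum_congr rfl fun j _ => by ring

end RankOneSIR

/-- The right side exceeds the left side by `Y Q + (A Y)²`. -/
theorem neg_mul_sub_mul_lt_neg_mul_mul_sub {Y Q A X γ : ℝ} (hY : 0 < Y) (hQ : 0 ≤ Q) (hA : 0 < A) :
    -Y * Q - A * (Y * (X - γ)) < -A * Y * (X - γ - A * Y) := by
  nlinarith [mul_nonneg hY.le hQ, pow_pos (mul_pos hA hY) 2]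

theorem stmt_10_general (n : ℕ) (a b : Fin n → ℝ) (ha : ∀ i, 0 < a i)
    (γ : ℝ)
    (x y : ℝ → Fin n → ℝ)
    (hx : ∀ j t, HasDerivAt (fun s => x s j)
        (-(a j) * x t j * (∑ k, b k * y t k)) t)
    (hy : ∀ j t, HasDerivAt (fun s => y s j)
        (a j * x t j * (∑ k, b k * y t k) - γ * y t j) t)
    (hypos : ∀ t ∈ Set.Ici (0:ℝ), 0 < ∑ k, b k * y t k)
    (hq : ∀ t ∈ Set.Ici (0:ℝ), 0 ≤ ∑ j, (a j)^2 * b j * x t j)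
    (i : Fin n) :
    ∀ t ∈ Set.Ici (0:ℝ),
      HasDerivAt (fun s => (∑ j, a j * b j * x s j) - γ - a i * (∑ k, b k * y s k))
        (-(∑ k, b k * y t k) * (∑ j, (a j)^2 * b j * x t j)
          - a i * ((∑ k, b k * y t k) * ((∑ j, a j * b j * x t j) - γ))) t ∧
      -(∑ k, b k * y t k) * (∑ j, (a j)^2 * b j * x t j)
          - a i * ((∑ k, b k * y t k) * ((∑ j, a j * b j * x t j) - γ))
        < -(a i) * (∑ k, b k * y t k) *
            ((∑ j, a j * b j * x t j) - γ - a i * (∑ k, b k * y t k)) := by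
  intro t ht
  have hxTilde := hasDerivAt_sum_mul_mul_of_sir_susceptible a b fun j => hx j t
  have hyBar := hasDerivAt_sum_mul_of_sir_infected a b γ fun j => hy j t
  exact ⟨(hxTilde.sub_const γ).sub (hyBar.const_mul (a i)),
    neg_mul_sub_mul_lt_neg_mul_mul_sub (hypos t ht) (hq t ht) (ha i)⟩

theorem stmt_10 (n : ℕ) (a b : Fin n → ℝ) (ha : ∀ i, 0 < a i) (hb : ∀ i, 0 < b i)
    (γ : ℝ) (hγ : 0 < γ)
    (x y : ℝ → Fin n → ℝ)
    (hx : ∀ j t, HasDerivAt (fun s => x s j)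
        (-(a j) * x t j * (∑ k, b k * y t k)) t)
    (hy : ∀ j t, HasDerivAt (fun s => y s j)
        (a j * x t j * (∑ k, b k * y t k) - γ * y t j) t)
    (hxnn : ∀ t ∈ Set.Ici (0:ℝ), ∀ j, 0 ≤ x t j)
    (hypos : ∀ t ∈ Set.Ici (0:ℝ), 0 < ∑ k, b k * y t k)
    (hq : ∀ t ∈ Set.Ici (0:ℝ), 0 ≤ ∑ j, (a j)^2 * b j * x t j)
    (i : Fin n) :
    ∀ t ∈ Set.Ici (0:ℝ),
      HasDerivAt (fun s => (∑ j, a j * b j * x s j) - γ - a i * (∑ k, b k * y s k))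
        (-(∑ k, b k * y t k) * (∑ j, (a j)^2 * b j * x t j)
          - a i * ((∑ k, b k * y t k) * ((∑ j, a j * b j * x t j) - γ))) t ∧
      -(∑ k, b k * y t k) * (∑ j, (a j)^2 * b j * x t j)
          - a i * ((∑ k, b k * y t k) * ((∑ j, a j * b j * x t j) - γ))
        < -(a i) * (∑ k, b k * y t k) *
            ((∑ j, a j * b j * x t j) - γ - a i * (∑ k, b k * y t k)) :=
  stmt_10_general n a b ha γ x y hx hy hypos hq i
end
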